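/- arXiv:0806.3260 — 2 statements merged into one kernel-verified Lean document; each statement's English description precedes it below -/
import Mathlib

section
/- Let A be an n×n complex matrix, let r₀ ∈ ℂⁿ, let 1 ≤ m ≤ n−1, and let r be a GMRES(m) residual of A from r₀ with r ≠ 0. Let K = K(A, r₀) be the n×(m+1) Krylov matrix, and assume K has full column rank m+1 (equivalently, KᴴK is invertible). Then K (KᴴK)⁻¹ e₁ = (1/‖r‖²) r, where e₁ = (1,0,…,0)ᵀ ∈ ℂ^{m+1} is the first standard basis vector. (Equivalently, the first column of the conjugate transpose of the Moore–Penrose pseudoinverse K† = (KᴴK)⁻¹Kᴴ equals r/‖r‖².) -/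
/-!
Write `r = K c`, where `c` lists the coefficients of the GMRES polynomial, so `c₀ = 1`.
Since `‖r‖ ≤ ‖r + t Aʲ r₀‖` for every `t` and `1 ≤ j ≤ m`, `r` is orthogonal to `Aʲ r₀`, hence
`Kᴴ r = ⟪K c, r⟫ e₁ = ‖r‖² e₁`. Therefore
`K (KᴴK)⁻¹ e₁ = ‖r‖⁻² K (KᴴK)⁻¹ KᴴK c = ‖r‖⁻² r`.
-/

open Polynomial Matrix

/-- The Euclidean (ℓ²) norm of a vector in ℂⁿ. -/
noncomputable def l2enorm {n : ℕ} (v : Fin n → ℂ) : ℝ :=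
  ‖(WithLp.equiv 2 (Fin n → ℂ)).symm v‖

/-- `s` is a GMRES(m) residual of `A` from `r`: there is a polynomial `p` of degree at most `m`
with `p 0 = 1` such that `s = p(A) r` and `‖s‖ ≤ ‖q(A) r‖` for all admissible `q`. -/
def IsGMRESResidual {n : ℕ} (m : ℕ) (A : Matrix (Fin n) (Fin n) ℂ)
    (r s : Fin n → ℂ) : Prop :=
  ∃ p : ℂ[X], p.natDegree ≤ m ∧ p.eval 0 = 1 ∧ s = (aeval A p).mulVec r ∧
    ∀ q : ℂ[X], q.natDegree ≤ m → q.eval 0 = 1 →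
      l2enorm s ≤ l2enorm ((aeval A q).mulVec r)

/-- The Krylov matrix `K(A, r) = [r, Ar, …, Aᵐ r]`, an `n × (m+1)` matrix. -/
noncomputable def krylov {n : ℕ} (m : ℕ) (A : Matrix (Fin n) (Fin n) ℂ) (r : Fin n → ℂ) :
    Matrix (Fin n) (Fin (m + 1)) ℂ :=
  Matrix.of fun i j => (A ^ (j : ℕ)).mulVec r i

open scoped InnerProductSpace ComplexOrder

theorem inner_eq_zero_of_forall_norm_le_norm_add_smul {𝕜 E : Type*} [RCLike 𝕜]
    [NormedAddCommGroup E] [InnerProductSpace 𝕜 E] {r w : E}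
    (h : ∀ t : 𝕜, ‖r‖ ≤ ‖r + t • w‖) : ⟪w, r⟫_𝕜 = 0 := by
  have hmin : ‖r - 0‖ = ⨅ x : 𝕜 ∙ w, ‖r - x‖ := by
    refine le_antisymm (le_ciInf fun ⟨x, hx⟩ => ?_)
      (ciInf_le ⟨0, Set.forall_mem_range.2 fun _ => norm_nonneg _⟩ (0 : 𝕜 ∙ w))
    obtain ⟨t, rfl⟩ := Submodule.mem_span_singleton.1 hx
    simpa [sub_eq_add_neg, ← neg_smul] using h (-t)
  rw [inner_eq_zero_symm]
  simpa using (Submodule.norm_eq_iInf_iff_inner_eq_zero _ (zero_mem _)).1 hmin w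
    (Submodule.mem_span_singleton_self w)

theorem star_dotProduct_eq_zero_of_forall_l2enorm_le_add_smul {n : ℕ} {r w : Fin n → ℂ}
    (h : ∀ t : ℂ, l2enorm r ≤ l2enorm (r + t • w)) : star w ⬝ᵥ r = 0 := by
  have := inner_eq_zero_of_forall_norm_le_norm_add_smul (r := WithLp.toLp 2 r)
    (w := WithLp.toLp 2 w) (by simpa [l2enorm] using h)
  rwa [EuclideanSpace.inner_toLp_toLp, dotProduct_comm] at this

theorem l2enorm_sq_eq_star_dotProduct {n : ℕ} (v : Fin n → ℂ) :
    (l2enorm v : ℂ) ^ 2 = star v ⬝ᵥ v := by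
  have := inner_self_eq_norm_sq_to_K (𝕜 := ℂ) (WithLp.toLp 2 v)
  rw [EuclideanSpace.inner_toLp_toLp, dotProduct_comm] at this
  exact_mod_cast this.symm

theorem aeval_mulVec_eq_krylov_mulVec {n m : ℕ} (A : Matrix (Fin n) (Fin n) ℂ) (r : Fin n → ℂ)
    {p : ℂ[X]} (hp : p.natDegree ≤ m) :
    aeval A p *ᵥ r = krylov m A r *ᵥ fun j => p.coeff j := by
  ext i
  rw [aeval_eq_sum_range' (Nat.lt_succ_of_le hp), ← Fin.sum_univ_eq_sum_range]
  simp only [mulVec, dotProduct, krylov, Matrix.sum_apply, Matrix.smul_apply, smul_eq_mul,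
    of_apply, Finset.sum_mul]
  rw [Finset.sum_comm]
  exact Finset.sum_congr rfl fun _ _ => Finset.sum_congr rfl fun _ _ => by ring

theorem conjTranspose_krylov_mulVec_apply {n m : ℕ} (A : Matrix (Fin n) (Fin n) ℂ)
    (r v : Fin n → ℂ) (j : Fin (m + 1)) :
    ((krylov m A r)ᴴ *ᵥ v) j = star (A ^ (j : ℕ) *ᵥ r) ⬝ᵥ v := rfl

namespace IsGMRESResidual

variable {n m : ℕ} {A : Matrix (Fin n) (Fin n) ℂ} {r₀ r : Fin n → ℂ}

theorem exists_eq_krylov_mulVec (h : IsGMRESResidual m A r₀ r) :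
    ∃ c : Fin (m + 1) → ℂ, c 0 = 1 ∧ r = krylov m A r₀ *ᵥ c := by
  obtain ⟨p, hdeg, hp0, rfl, -⟩ := h
  exact ⟨fun j => p.coeff j, by simpa [coeff_zero_eq_eval_zero] using hp0,
    aeval_mulVec_eq_krylov_mulVec A r₀ hdeg⟩

theorem star_pow_mulVec_dotProduct_eq_zero (h : IsGMRESResidual m A r₀ r) {j : ℕ}
    (hj0 : j ≠ 0) (hjm : j ≤ m) : star (A ^ j *ᵥ r₀) ⬝ᵥ r = 0 := by
  obtain ⟨p, hdeg, hp0, rfl, hmin⟩ := h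
  refine star_dotProduct_eq_zero_of_forall_l2enorm_le_add_smul fun t => ?_
  have hdeg' : (p + C t * X ^ j).natDegree ≤ m :=
    natDegree_add_le_of_degree_le hdeg ((natDegree_C_mul_X_pow_le t j).trans hjm)
  simpa [add_mulVec, Algebra.algebraMap_eq_smul_one, smul_mulVec] using
    hmin _ hdeg' (by simp [hp0, hj0])

theorem conjTranspose_krylov_mulVec (h : IsGMRESResidual m A r₀ r) :
    (krylov m A r₀)ᴴ *ᵥ r = (star r ⬝ᵥ r) • Pi.single 0 1 := by
  set K := krylov m A r₀
  obtain ⟨c, hc0, hrc⟩ := h.exists_eq_krylov_mulVec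
  have hsupp : Kᴴ *ᵥ r = (Kᴴ *ᵥ r) 0 • Pi.single 0 1 := by
    ext j
    rcases eq_or_ne j 0 with rfl | hj
    · simp
    · rw [conjTranspose_krylov_mulVec_apply, h.star_pow_mulVec_dotProduct_eq_zero
        (Fin.val_ne_zero_iff.2 hj) (Nat.lt_succ_iff.1 j.isLt)]
      simp [hj]
  have hfirst : (Kᴴ *ᵥ r) 0 = star r ⬝ᵥ r := calc
    (Kᴴ *ᵥ r) 0 = star c ⬝ᵥ (Kᴴ *ᵥ r) := by
      conv_rhs => rw [hsupp]
      simp [hc0]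
    _ = star r ⬝ᵥ r := by rw [dotProduct_mulVec, ← star_mulVec, ← hrc]
  rwa [hfirst] at hsupp

end IsGMRESResidual

theorem krylov_pseudoinverse_first_column_general {n : ℕ} (m : ℕ)
    (A : Matrix (Fin n) (Fin n) ℂ) (r₀ r : Fin n → ℂ)
    (hres : IsGMRESResidual m A r₀ r) (hr : r ≠ 0)
    (hrank : IsUnit ((krylov m A r₀)ᴴ * krylov m A r₀)) :
    (krylov m A r₀ * ((krylov m A r₀)ᴴ * krylov m A r₀)⁻¹).mulVec
        (Pi.single 0 1) = ((l2enorm r : ℂ) ^ 2)⁻¹ • r := by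
  obtain ⟨c, -, hrc⟩ := hres.exists_eq_krylov_mulVec
  set K := krylov m A r₀
  have hrr : star r ⬝ᵥ r ≠ 0 := dotProduct_star_self_eq_zero.not.2 hr
  have he₀ : (Pi.single 0 1 : Fin (m + 1) → ℂ) = (star r ⬝ᵥ r)⁻¹ • (Kᴴ *ᵥ r) := by
    rw [hres.conjTranspose_krylov_mulVec, smul_smul, inv_mul_cancel₀ hrr, one_smul]
  have hproj : K * (Kᴴ * K)⁻¹ * Kᴴ * K = K := by
    rw [Matrix.mul_assoc _ Kᴴ, Matrix.mul_assoc,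
      nonsing_inv_mul _ ((isUnit_iff_isUnit_det _).1 hrank), Matrix.mul_one]
  rw [he₀, mulVec_smul, l2enorm_sq_eq_star_dotProduct]
  congr 1
  rw [hrc, mulVec_mulVec, mulVec_mulVec, hproj]

/-- The first column of `(K†)ᴴ`, i.e. `K (Kᴴ K)⁻¹ e₁`, equals `r / ‖r‖²` where `r` is the
GMRES(m) residual and `K = K(A, r₀)` is the Krylov matrix (assumed of full column rank). -/
theorem krylov_pseudoinverse_first_column {n : ℕ} (m : ℕ) (hm : 1 ≤ m) (hmn : m ≤ n - 1)
    (A : Matrix (Fin n) (Fin n) ℂ) (r₀ r : Fin n → ℂ)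
    (hres : IsGMRESResidual m A r₀ r) (hr : r ≠ 0)
    (hrank : IsUnit ((krylov m A r₀)ᴴ * krylov m A r₀)) :
    (krylov m A r₀ * ((krylov m A r₀)ᴴ * krylov m A r₀)⁻¹).mulVec
        (Pi.single 0 1) = ((l2enorm r : ℂ) ^ 2)⁻¹ • r :=
  krylov_pseudoinverse_first_column_general m A r₀ r hres hr hrank
end

section
/- Let A be an n×n complex normal invertible matrix, let 1 ≤ m ≤ n−1, and let r₀ ∈ ℂⁿ be nonzero. If r_m is a GMRES(m) residual of A from r₀ and r̂_m is a GMRES(m) residual of Aᴴ from the same vector r₀, and both are nonzero, then ‖r_m‖ = ‖r̂_m‖. -/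
/-!
For normal `A` every `p(A)` is normal and `p(A)ᴴ = p̄(Aᴴ)`, where `p̄` conjugates the
coefficients, so `‖p(A) r‖ = ‖p̄(Aᴴ) r‖`. Since `p ↦ p̄` preserves `deg p ≤ m` and `p(0) = 1`, the
GMRES(m) problems for `A` and `Aᴴ` minimise over the same set of values.
-/

open Polynomial Matrix

section StarAlgebra

variable {R A : Type*} [CommSemiring R] [StarRing R] [Semiring A] [StarRing A] [Algebra R A]
  [StarModule R A]

theorem Polynomial.star_aeval (a : A) (p : R[X]) :
    star (aeval a p) = aeval (star a) (p.map (starRingEnd R)) := by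
  induction p using Polynomial.induction_on' with
  | add p q hp hq => simp only [map_add, star_add, Polynomial.map_add, hp, hq]
  | monomial k c =>
    simp [aeval_monomial, Algebra.algebraMap_eq_smul_one, star_pow, star_smul, starRingEnd_apply]

instance IsStarNormal.aeval (a : A) [IsStarNormal a] (p : R[X]) : IsStarNormal (aeval a p) := by
  have hle : Algebra.adjoin R {a} ≤ (StarAlgebra.adjoin R {a}).toSubalgebra :=
    Algebra.adjoin_le (Set.singleton_subset_iff.mpr (StarAlgebra.self_mem_adjoin_singleton R a))
  have hmem : Polynomial.aeval a p ∈ StarAlgebra.adjoin R {a} :=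
    hle (aeval_mem_adjoin_singleton R a)
  exact ⟨setLike_mul_comm (star_mem hmem) hmem⟩

end StarAlgebra

theorem l2enorm_mulVec_eq_conjTranspose {n : ℕ} (M : Matrix (Fin n) (Fin n) ℂ) [IsStarNormal M]
    (v : Fin n → ℂ) : l2enorm (M *ᵥ v) = l2enorm (Mᴴ *ᵥ v) := by
  have := ContinuousLinearMap.isStarNormal_iff_norm_eq_adjoint.mp
    (inferInstance : IsStarNormal (Matrix.toEuclideanCLM (n := Fin n) (𝕜 := ℂ) M))
    (WithLp.toLp 2 v)
  rw [← ContinuousLinearMap.star_eq_adjoint, ← map_star] at this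
  simpa [l2enorm, Matrix.star_eq_conjTranspose] using this

theorem l2enorm_aeval_mulVec_eq_aeval_conjTranspose {n : ℕ} (A : Matrix (Fin n) (Fin n) ℂ)
    [IsStarNormal A] (q : ℂ[X]) (v : Fin n → ℂ) :
    l2enorm (aeval A q *ᵥ v) = l2enorm (aeval Aᴴ (q.map (starRingEnd ℂ)) *ᵥ v) := by
  rw [l2enorm_mulVec_eq_conjTranspose, ← star_eq_conjTranspose, star_aeval, star_eq_conjTranspose]

theorem IsGMRESResidual.l2enorm_le_of_conjTranspose {n m : ℕ} {A : Matrix (Fin n) (Fin n) ℂ}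
    [IsStarNormal A] {r s t : Fin n → ℂ} (hs : IsGMRESResidual m A r s)
    (ht : IsGMRESResidual m Aᴴ r t) : l2enorm s ≤ l2enorm t := by
  obtain ⟨-, -, -, -, hs_min⟩ := hs
  obtain ⟨q, hq_deg, hq_zero, rfl, -⟩ := ht
  calc l2enorm s ≤ l2enorm (aeval A (q.map (starRingEnd ℂ)) *ᵥ r) :=
        hs_min _ (natDegree_map_le.trans hq_deg) (by rw [eval_zero_map, hq_zero, map_one])
    _ = l2enorm (aeval Aᴴ q *ᵥ r) := by
        rw [l2enorm_aeval_mulVec_eq_aeval_conjTranspose, Polynomial.map_map,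
          RingHomCompTriple.comp_eq, Polynomial.map_id]

theorem norm_gmres_residual_eq_norm_gmres_residual_conjTranspose_general {n : ℕ} (m : ℕ)
    (A : Matrix (Fin n) (Fin n) ℂ) (hnormal : A * Aᴴ = Aᴴ * A)
    (r₀ rm rhatm : Fin n → ℂ)
    (h1 : IsGMRESResidual m A r₀ rm) (h2 : IsGMRESResidual m Aᴴ r₀ rhatm) :
    l2enorm rm = l2enorm rhatm := by
  have : IsStarNormal A := ⟨hnormal.symm⟩
  have : IsStarNormal Aᴴ := IsStarNormal.star
  refine le_antisymm (h1.l2enorm_le_of_conjTranspose h2) ?_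
  exact h2.l2enorm_le_of_conjTranspose (by rwa [conjTranspose_conjTranspose])

/-- For a normal invertible matrix `A`, GMRES(m) applied to `A` and to `Aᴴ` from the same
initial residual `r₀` produces residual vectors of equal norm. -/
theorem norm_gmres_residual_eq_norm_gmres_residual_conjTranspose {n : ℕ} (m : ℕ)
    (hm : 1 ≤ m) (hmn : m ≤ n - 1)
    (A : Matrix (Fin n) (Fin n) ℂ) (hnormal : A * Aᴴ = Aᴴ * A) (hA : IsUnit A)
    (r₀ rm rhatm : Fin n → ℂ) (hr₀ : r₀ ≠ 0)
    (h1 : IsGMRESResidual m A r₀ rm) (h2 : IsGMRESResidual m Aᴴ r₀ rhatm)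
    (hrm : rm ≠ 0) (hrhatm : rhatm ≠ 0) :
    l2enorm rm = l2enorm rhatm :=
  norm_gmres_residual_eq_norm_gmres_residual_conjTranspose_general m A hnormal r₀ rm rhatm h1 h2
end
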